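/- Let $F$ be a class of functions, $f^* \in F$, $\ell$ a nonnegative loss, $\mathcal{L}_f = \ell_f - \ell_{f^*}$, and $\lambda > 0$. Suppose that on an event $\Omega_0$, for all $f \in F$, $|(P - P_N)\mathcal{L}_f| \leq \theta\max(r(2\max(\|f-f^*\|, \rho^*))^{2\kappa}, \|f-f^*\|_{L_2}^{2\kappa})$. Suppose the Bernstein condition $\|f-f^*\|_{L_2}^{2\kappa} \leq A\, P\mathcal{L}_f$ holds on $F$ with $A\theta \leq 1/2$, that $\rho \mapsto r(2\rho)/\rho$ is non-increasing, that $\rho^*$ satisfies the sparsity inequality $\Delta(\rho^*) \geq 4\rho^*/5$, and that $10\theta r(2\rho)^{2\kappa}/(7\rho) < \lambda < r(2\rho)^{2\kappa}/(2A\rho)$ for all $\rho \geq \rho^*$. Then on $\Omega_0$, the regularized empirical risk minimizer $\hat f \in \arg\min_{f\in F}(P_N\ell_f + \lambda\|f\|)$ satisfies $\|\hat f - f^*\| \leq \rho^*$, $\|\hat f - f^*\|_{L_2} \leq r(2\rho^*)$, and $P\mathcal{L}_{\hat f} \leq r(2\rho^*)^{2\kappa}/A$. -/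
import Mathlib

open RealInnerProductSpace

/-- Subdifferential of a (regularization) norm `n` at `f`, with respect to the
`L₂` (inner product) pairing: `{g : n(f+h) - n(f) ≥ ⟨g,h⟩ for all h}`. -/
def subdiffNorm {E : Type*} [NormedAddCommGroup E] [InnerProductSpace ℝ E]
    (n : E → ℝ) (f : E) : Set E :=
  {g : E | ∀ h : E, ⟪g, h⟫ ≤ n (f + h) - n f}

/-- `Γ_{f*}(ρ)`: union of the subdifferentials of the norm `n` over the ball
`f* + (ρ/20)B`. -/
def gammaSet {E : Type*} [NormedAddCommGroup E] [InnerProductSpace ℝ E]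
    (n : E → ℝ) (fstar : E) (ρ : ℝ) : Set E :=
  ⋃ f ∈ {f : E | n (f - fstar) ≤ ρ / 20}, subdiffNorm n f

/-- Sparsity parameter
`Δ(ρ) = inf_{h ∈ ρS ∩ r(2ρ)B_{L₂}} sup_{g ∈ Γ_{f*}(ρ)} ⟨h, g⟩`, where the `L₂` norm
is the ambient inner-product norm. -/
noncomputable def sparsityParam {E : Type*} [NormedAddCommGroup E]
    [InnerProductSpace ℝ E] (n : E → ℝ) (fstar : E) (r : ℝ → ℝ) (ρ : ℝ) : ℝ :=
  sInf ((fun h => sSup ((fun g => ⟪h, g⟫) '' gammaSet n fstar ρ)) ''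
    {h : E | n h = ρ ∧ ‖h‖ ≤ r (2 * ρ)})

/-- Scaling of `rpow` for a negative base and a positive scalar. -/
lemma rpow_scale_of_neg {s x : ℝ} (y : ℝ) (hs : 0 < s) (hx : x < 0) :
    (s * x) ^ y = s ^ y * x ^ y := by
  rw [Real.rpow_def_of_neg (mul_neg_of_pos_of_neg hs hx), Real.rpow_def_of_neg hx,
    Real.rpow_def_of_pos hs, Real.log_mul hs.ne' hx.ne, add_mul, Real.exp_add, mul_assoc]

set_option maxHeartbeats 4000000 in
/-- deterministic behaviour of the regularized empirical risk minimizer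
on the event `Ω₀`. Here `Pl f` is the true risk `Pℓ_f`, `PN f` is the empirical risk
`P_N ℓ_f`, `n` is the regularization norm and the ambient norm is the `L₂` norm. -/
theorem stmt_13 {E : Type*} [NormedAddCommGroup E] [InnerProductSpace ℝ E]
    (F : Set E) (fstar hatf : E) (hfstarF : fstar ∈ F) (hhatfF : hatf ∈ F)
    (n : E → ℝ)
    (hn_add : ∀ x y : E, n (x + y) ≤ n x + n y)
    (hn_smul : ∀ (c : ℝ) (x : E), n (c • x) = |c| * n x)
    (Pl PN : E → ℝ) (lam θ A κ ρstar : ℝ) (r : ℝ → ℝ)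
    (hκ : 1 ≤ κ) (hθ : 0 < θ) (hA : 0 < A) (hAθ : A * θ ≤ 1 / 2)
    (hρstar : 0 < ρstar)
    -- the event Ω₀:
    (hΩ₀ : ∀ f ∈ F,
      |(Pl f - Pl fstar) - (PN f - PN fstar)| ≤
        θ * max ((r (2 * max (n (f - fstar)) ρstar)) ^ (2 * κ))
          (‖f - fstar‖ ^ (2 * κ)))
    -- the Bernstein condition on F:
    (hbern : ∀ f ∈ F, ‖f - fstar‖ ^ (2 * κ) ≤ A * (Pl f - Pl fstar))
    -- ρ ↦ r(2ρ)/ρ is non-increasing: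
    (hrmono : ∀ ρ₁ ρ₂ : ℝ, 0 < ρ₁ → ρ₁ ≤ ρ₂ → r (2 * ρ₂) / ρ₂ ≤ r (2 * ρ₁) / ρ₁)
    -- ρ* satisfies the sparsity equation:
    (hsparse : 4 * ρstar / 5 ≤ sparsityParam n fstar r ρstar)
    -- choice of the regularization parameter:
    (hlam : ∀ ρ : ℝ, ρstar ≤ ρ →
      10 * θ * (r (2 * ρ)) ^ (2 * κ) / (7 * ρ) < lam ∧
        lam < (r (2 * ρ)) ^ (2 * κ) / (2 * A * ρ))
    -- hatf is the regularized empirical risk minimizer over F: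
    (hmin : ∀ f ∈ F, PN hatf + lam * n hatf ≤ PN f + lam * n f) :
    n (hatf - fstar) ≤ ρstar ∧ ‖hatf - fstar‖ ≤ r (2 * ρstar) ∧
      Pl hatf - Pl fstar ≤ (r (2 * ρstar)) ^ (2 * κ) / A := by
  classical
  -- basic facts about the norm n
  have hn0 : n 0 = 0 := by simpa using hn_smul 0 0
  have hnneg : ∀ x : E, n (-x) = n x := fun x => by simpa using hn_smul (-1) x
  have h2κ : (0:ℝ) < 2 * κ := by linarith
  -- nonemptiness of the constraint set at ρstar, r(2ρstar) ≥ 0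
  unfold sparsityParam at hsparse
  have hDne : {h : E | n h = ρstar ∧ ‖h‖ ≤ r (2 * ρstar)}.Nonempty := by
    by_contra hD
    rw [Set.not_nonempty_iff_eq_empty] at hD
    rw [hD, Set.image_empty, Real.sInf_empty] at hsparse
    linarith
  obtain ⟨h₀, hh₀n, hh₀r⟩ := hDne
  have hrstar : 0 ≤ r (2 * ρstar) := le_trans (norm_nonneg _) hh₀r
  have hXstar : 0 ≤ (r (2 * ρstar)) ^ (2 * κ) := Real.rpow_nonneg hrstar _
  have hlamstar := hlam ρstar le_rfl
  have hlampos : 0 < lam := by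
    refine lt_of_le_of_lt ?_ hlamstar.1
    apply div_nonneg
    · exact mul_nonneg (by linarith) hXstar
    · linarith
  -- minimality at fstar
  have hKey : (PN hatf - PN fstar) + lam * (n hatf - n fstar) ≤ 0 := by
    have := hmin fstar hfstarF
    linarith
  have hΔlow : -(n (hatf - fstar)) ≤ n hatf - n fstar := by
    have h1 := hn_add hatf (fstar - hatf)
    rw [add_sub_cancel] at h1
    have h2 : n (fstar - hatf) = n (hatf - fstar) := by rw [← neg_sub, hnneg]
    linarith
  have hbernh := hbern hatf hhatfF
  have hL0 : 0 ≤ Pl hatf - Pl fstar := by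
    have h := Real.rpow_nonneg (norm_nonneg (hatf - fstar)) (2 * κ)
    nlinarith [h, hbernh, hA]
  -- STEP 1 : the regularization norm estimate
  have step1 : n (hatf - fstar) ≤ ρstar := by
    by_contra hgt'
    push_neg at hgt'
    set ρ := n (hatf - fstar) with hρdef
    have hρpos : 0 < ρ := lt_trans hρstar hgt'
    have hΩ := hΩ₀ hatf hhatfF
    rw [max_eq_left hgt'.le] at hΩ
    have habs := abs_le.mp hΩ
    have hlamρ := hlam ρ hgt'.le
    rcases le_or_gt ((r (2 * ρ)) ^ (2*κ)) (‖hatf - fstar‖ ^ (2*κ)) with hXH | hHX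
    · -- case 1 : the L₂ term dominates
      rw [max_eq_right hXH] at habs
      have e2 : θ * ‖hatf - fstar‖ ^ (2*κ) ≤ θ * (A * (Pl hatf - Pl fstar)) :=
        mul_le_mul_of_nonneg_left hbernh hθ.le
      have e3 : 2 * (θ * (A * (Pl hatf - Pl fstar))) ≤ Pl hatf - Pl fstar := by
        nlinarith [mul_nonneg (by linarith : (0:ℝ) ≤ 1/2 - A * θ) hL0]
      have k1 : (Pl hatf - Pl fstar) / 2 ≤ PN hatf - PN fstar := by linarith [habs.2]
      have k3 : lam * (2 * A * ρ) < (r (2 * ρ)) ^ (2*κ) := by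
        have h := hlamρ.2
        rw [lt_div_iff₀ (by positivity : (0:ℝ) < 2 * A * ρ)] at h
        linarith
      have hmul := mul_le_mul_of_nonneg_left hΔlow hlampos.le
      have kLN : PN hatf - PN fstar ≤ lam * ρ := by linarith [hmul, hKey]
      have kAL : A * (Pl hatf - Pl fstar) ≤ A * (2 * (lam * ρ)) :=
        mul_le_mul_of_nonneg_left (by linarith) hA.le
      linarith [k3, hXH, hbernh, kAL]
    · rcases le_or_gt 0 (r (2 * ρ)) with hr2 | hr2
      · -- case 2a : the r(2ρ) term dominates and r(2ρ) ≥ 0 : sparsity argument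
        have hhr : ‖hatf - fstar‖ ≤ r (2 * ρ) := by
          by_contra hc
          push_neg at hc
          have := Real.rpow_le_rpow hr2 hc.le h2κ.le
          linarith
        set c := ρstar / ρ with hcdef
        have hcpos : 0 < c := div_pos hρstar hρpos
        set h' := c • (hatf - fstar) with hh'def
        have hn' : n h' = ρstar := by
          rw [hh'def, hn_smul, abs_of_pos hcpos, hcdef, ← hρdef, div_mul_cancel₀ _ hρpos.ne']
        have hr' : ‖h'‖ ≤ r (2 * ρstar) := by
          rw [hh'def, norm_smul, Real.norm_eq_abs, abs_of_pos hcpos]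
          have key := hrmono ρstar ρ hρstar hgt'.le
          rw [div_le_div_iff₀ hρpos hρstar] at key
          have h1 : c * ‖hatf - fstar‖ ≤ c * r (2 * ρ) :=
            mul_le_mul_of_nonneg_left hhr hcpos.le
          have h2 : c * r (2 * ρ) ≤ r (2 * ρstar) := by
            rw [hcdef, div_mul_eq_mul_div, div_le_iff₀ hρpos]
            nlinarith
          linarith
        have hmem : sSup ((fun g => ⟪h', g⟫) '' gammaSet n fstar ρstar) ∈
            ((fun h => sSup ((fun g => ⟪h, g⟫) '' gammaSet n fstar ρstar)) ''
              {h : E | n h = ρstar ∧ ‖h‖ ≤ r (2 * ρstar)}) :=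
          ⟨h', ⟨hn', hr'⟩, rfl⟩
        have hbb : BddBelow
            ((fun h => sSup ((fun g => ⟪h, g⟫) '' gammaSet n fstar ρstar)) ''
              {h : E | n h = ρstar ∧ ‖h‖ ≤ r (2 * ρstar)}) := by
          by_contra hnb
          rw [csInf_of_not_bddBelow hnb, Real.sInf_empty] at hsparse
          linarith
        have hsp2 : 4 * ρstar / 5 ≤ sSup ((fun g => ⟪h', g⟫) '' gammaSet n fstar ρstar) :=
          le_trans hsparse (csInf_le hbb hmem)
        have himne : ((fun g => ⟪h', g⟫) '' gammaSet n fstar ρstar).Nonempty := by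
          by_contra hne
          rw [Set.not_nonempty_iff_eq_empty] at hne
          rw [hne, Real.sSup_empty] at hsp2
          linarith
        have hbound : ∀ x ∈ ((fun g => ⟪h', g⟫) '' gammaSet n fstar ρstar),
            x ≤ c * ((n hatf - n fstar) + ρstar / 10) := by
          rintro x ⟨g, hg, rfl⟩
          dsimp only
          simp only [gammaSet, Set.mem_iUnion, Set.mem_setOf_eq, exists_prop] at hg
          obtain ⟨f₀, hf₀, hgsub⟩ := hg
          have hgs : ∀ z : E, ⟪g, z⟫ ≤ n (f₀ + z) - n f₀ := hgsub
          have h1 : ⟪g, hatf - f₀⟫ ≤ n hatf - n f₀ := by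
            have := hgs (hatf - f₀); rwa [add_sub_cancel] at this
          have h2 : ⟪g, f₀ - fstar⟫ ≤ ρstar / 20 := by
            have t1 := hgs (f₀ - fstar)
            have t2 := hn_add f₀ (f₀ - fstar)
            linarith
          have h3 : n fstar ≤ n f₀ + ρstar / 20 := by
            have t1 := hn_add f₀ (fstar - f₀)
            rw [add_sub_cancel] at t1
            have t2 : n (fstar - f₀) = n (f₀ - fstar) := by rw [← neg_sub, hnneg]
            linarith
          have hsplit : ⟪g, hatf - fstar⟫ = ⟪g, hatf - f₀⟫ + ⟪g, f₀ - fstar⟫ := by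
            rw [← inner_add_right, sub_add_sub_cancel]
          have hgh : ⟪g, hatf - fstar⟫ ≤ (n hatf - n fstar) + ρstar / 10 := by
            rw [hsplit]; linarith
          have hip : ⟪h', g⟫ = c * ⟪g, hatf - fstar⟫ := by
            rw [hh'def, real_inner_smul_left, real_inner_comm]
          rw [hip]
          exact mul_le_mul_of_nonneg_left hgh hcpos.le
        have hfin : 4 * ρstar / 5 ≤ c * ((n hatf - n fstar) + ρstar / 10) :=
          le_trans hsp2 (csSup_le himne hbound)
        have hΔ7 : 7 * ρ / 10 ≤ n hatf - n fstar := by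
          rw [hcdef, div_mul_eq_mul_div, le_div_iff₀ hρpos] at hfin
          nlinarith [hfin, hgt', hρstar]
        rw [max_eq_left hHX.le] at habs
        have hl1 : 10 * θ * (r (2*ρ)) ^ (2*κ) < lam * (7 * ρ) := by
          have h := hlamρ.1
          rwa [div_lt_iff₀ (by positivity : (0:ℝ) < 7 * ρ)] at h
        have hmul := mul_le_mul_of_nonneg_left hΔ7 hlampos.le
        linarith [habs.2, hl1, hmul, hL0, hKey]
      · -- case 2b : r(2ρ) < 0 ; contradiction with hlam at large ρ₂
        have hXpos : 0 < (r (2*ρ)) ^ (2*κ) :=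
          lt_of_le_of_lt (Real.rpow_nonneg (norm_nonneg _) _) hHX
        set X := (r (2*ρ)) ^ (2*κ) with hXdef
        set C := 10 * θ * X / (7 * ρ) with hCdef
        have hCpos : 0 < C := by rw [hCdef]; positivity
        set t := max 1 (lam / C) + 1 with htdef
        have ht1 : 1 ≤ t := by
          have := le_max_left 1 (lam / C); rw [htdef]; linarith
        have htpos : 0 < t := by linarith
        have hρρ : ρ ≤ t * ρ := by nlinarith [mul_nonneg (by linarith : (0:ℝ) ≤ t - 1) hρpos.le]
        have h1 := hrmono ρ (t * ρ) hρpos hρρ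
        rw [div_le_div_iff₀ (by positivity : (0:ℝ) < t * ρ) hρpos] at h1
        have hrt : r (2 * (t * ρ)) ≤ t * r (2 * ρ) := by nlinarith [h1, hρpos]
        set s := r (2 * (t * ρ)) / r (2 * ρ) with hsdef
        have hst : t ≤ s := by
          rw [hsdef, le_div_iff_of_neg hr2]
          exact hrt
        have hspos : 0 < s := lt_of_lt_of_le htpos hst
        have hseq : r (2 * (t * ρ)) = s * r (2 * ρ) := by
          rw [hsdef, div_mul_cancel₀ _ hr2.ne]
        have hs2κ : t ^ (2*κ) ≤ s ^ (2*κ) :=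
          Real.rpow_le_rpow (by linarith) hst (by linarith)
        have ht2κ : t * t ≤ t ^ (2*κ) := by
          have h := Real.rpow_le_rpow_of_exponent_le ht1 (by linarith : (2:ℝ) ≤ 2*κ)
          rwa [Real.rpow_two, sq] at h
        have hXeq : (r (2 * (t * ρ))) ^ (2*κ) = s ^ (2*κ) * X := by
          rw [hseq, rpow_scale_of_neg _ hspos hr2]
        have hlamt := (hlam (t * ρ) (by linarith [hρρ])).1
        rw [div_lt_iff₀ (by positivity : (0:ℝ) < 7 * (t * ρ))] at hlamt
        rw [hXeq] at hlamt
        have hbig : 10 * θ * (t * t * X) ≤ 10 * θ * (s ^ (2*κ) * X) := by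
          nlinarith [mul_nonneg (sub_nonneg.mpr hs2κ) hXpos.le,
            mul_nonneg (sub_nonneg.mpr ht2κ) hXpos.le, hθ]
        have hC_t : C * t < lam := by
          rw [hCdef, div_mul_eq_mul_div, div_lt_iff₀ (by positivity : (0:ℝ) < 7 * ρ)]
          nlinarith [hlamt, hbig, htpos]
        have hge : lam / C + 1 ≤ t := by
          have := le_max_right 1 (lam / C); rw [htdef]; linarith
        have hfin : lam + C ≤ C * t := by
          have h := mul_le_mul_of_nonneg_left hge hCpos.le
          rw [mul_add, mul_one, mul_div_cancel₀ _ hCpos.ne'] at h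
          linarith
        linarith
  -- STEP 2 : the L₂ estimate and the excess risk estimate
  have hΩ := hΩ₀ hatf hhatfF
  rw [max_eq_right step1] at hΩ
  have habs := abs_le.mp hΩ
  have kLN : PN hatf - PN fstar ≤ lam * ρstar := by
    have hmul := mul_le_mul_of_nonneg_left hΔlow hlampos.le
    have hmono : lam * (n (hatf - fstar)) ≤ lam * ρstar :=
      mul_le_mul_of_nonneg_left step1 hlampos.le
    linarith [hmul, hmono, hKey]
  have klam : lam * (2 * A * ρstar) < (r (2*ρstar)) ^ (2*κ) := by
    have h := hlamstar.2
    rw [lt_div_iff₀ (by positivity : (0:ℝ) < 2 * A * ρstar)] at h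
    linarith
  have step2 : ‖hatf - fstar‖ ≤ r (2 * ρstar) := by
    by_contra hc
    push_neg at hc
    have hHgt : (r (2*ρstar)) ^ (2*κ) < ‖hatf - fstar‖ ^ (2*κ) :=
      Real.rpow_lt_rpow hrstar hc h2κ
    rw [max_eq_right hHgt.le] at habs
    have e2 : θ * ‖hatf - fstar‖ ^ (2*κ) ≤ θ * (A * (Pl hatf - Pl fstar)) :=
      mul_le_mul_of_nonneg_left hbernh hθ.le
    have e3 : 2 * (θ * (A * (Pl hatf - Pl fstar))) ≤ Pl hatf - Pl fstar := by
      nlinarith [mul_nonneg (by linarith : (0:ℝ) ≤ 1/2 - A * θ) hL0]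
    have k1 : Pl hatf - Pl fstar ≤ 2 * (lam * ρstar) := by linarith [habs.2]
    have kAL : A * (Pl hatf - Pl fstar) ≤ A * (2 * (lam * ρstar)) :=
      mul_le_mul_of_nonneg_left k1 hA.le
    linarith [hbernh, kAL, klam, hHgt]
  refine ⟨step1, step2, ?_⟩
  have hHle : ‖hatf - fstar‖ ^ (2*κ) ≤ (r (2*ρstar)) ^ (2*κ) :=
    Real.rpow_le_rpow (norm_nonneg _) step2 h2κ.le
  rw [max_eq_left hHle] at habs
  have k1 : Pl hatf - Pl fstar ≤ lam * ρstar + θ * ((r (2*ρstar)) ^ (2*κ)) := by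
    linarith [habs.2]
  have k2 := mul_le_mul_of_nonneg_left k1 hA.le
  rw [le_div_iff₀ hA]
  linarith [k2, klam, mul_nonneg (by linarith : (0:ℝ) ≤ 1/2 - A * θ) hXstar]
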